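/- With notation as above: if σ ∈ W₁' is of minimal length in its W_{1,2}-double coset, then W₂ ∩ σW₂σ⁻¹ is a special (standard parabolic) subgroup of W₂. -/

import Mathlib

/-!
Write `σ = u ρ` with `u ∈ W₁` and `ρ ∈ Ω₁`. As `ρ` preserves length it permutes the simple
reflections, so `W ∩ σ W₂ σ⁻¹ = u W_J u⁻¹` with `J = ρ(S₂)`. Minimality of `σ` in its
`W_{1,2}`-double coset means that no `s_i` with `i ∈ S₂` is a left descent of `u`: a left inversion
of an element of `W₁` lies in `W₁`, so such an `s_i` would lie in `W_{1,2}`.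

For such `u` (Kilmoyer), `W₂ ∩ u W_J u⁻¹` is generated by the `s_i`, `i ∈ S₂`, with
`u⁻¹ s_i u ∈ W_J`. Indeed, if `x` lies in the intersection and `s_i` (`i ∈ S₂`) is a left descent
of `x`, then lengths add in `x u`, so `s_i` is a left inversion of `x u = u (u⁻¹ x u)`. By the
strong exchange condition it occurs in the left inversion sequence of a reduced word for `u`
followed by a `J`-word for `u⁻¹ x u`; it cannot occur in the first part, so `u⁻¹ s_i u ∈ W_J`,
and induction on `ℓ(x)` finishes. The strong exchange condition for arbitrary words comes from
Tits' parity representation.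
-/

section ReflectionStep

variable {G : Type*} [Group G]

def reflectionStep [DecidableEq G] (r : G) : Function.End (G × ZMod 2) :=
  fun p => (r * p.1 * r⁻¹, p.2 + if p.1 = r then 1 else 0)

lemma reflectionStep_smul [DecidableEq G] (r t : G) (ε : ZMod 2) :
    reflectionStep r • (t, ε) = (r * t * r⁻¹, ε + if t = r then 1 else 0) := rfl

variable {a b : G}

lemma mul_mul_pow_eq_inv_mul (ha : a⁻¹ = a) (hb : b⁻¹ = b) (k : ℕ) :
    b * (a * b) ^ k = ((a * b) ^ k)⁻¹ * b := by
  rw [← mul_inv_eq_iff_eq_mul, ← conj_pow, ← inv_pow, ← mul_assoc, mul_inv_cancel_right,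
    mul_inv_rev, ha, hb]

lemma mul_pow_mul_inv_eq_iff (ha : a⁻¹ = a) (hb : b⁻¹ = b) (k : ℕ) (t : G) :
    (a * b) ^ k * t * ((a * b) ^ k)⁻¹ = b ↔ (a * b) ^ (2 * k) * t = b := by
  rw [mul_inv_eq_iff_eq_mul, mul_mul_pow_eq_inv_mul ha hb, eq_inv_mul_iff_mul_eq, ← mul_assoc,
    ← pow_add, two_mul]

lemma mul_mul_pow_mul_inv_mul_inv_eq_iff (ha : a⁻¹ = a) (hb : b⁻¹ = b) (k : ℕ) (t : G) :
    b * ((a * b) ^ k * t * ((a * b) ^ k)⁻¹) * b⁻¹ = a ↔ (a * b) ^ (2 * k + 1) * t = b := by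
  rw [mul_inv_eq_iff_eq_mul, ← eq_inv_mul_iff_mul_eq, mul_inv_eq_iff_eq_mul, hb, mul_assoc,
    ← pow_succ', mul_mul_pow_eq_inv_mul ha hb, eq_inv_mul_iff_mul_eq, ← mul_assoc, ← pow_add]
  rw [add_right_comm, ← two_mul]

lemma reflectionStep_mul_pow_smul [DecidableEq G] (ha : a⁻¹ = a) (hb : b⁻¹ = b) (k : ℕ)
    (t : G) (ε : ZMod 2) :
    (reflectionStep a * reflectionStep b) ^ k • (t, ε) =
      ((a * b) ^ k * t * ((a * b) ^ k)⁻¹,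
        ε + ∑ n ∈ Finset.range (2 * k), if (a * b) ^ n * t = b then 1 else 0) := by
  induction k with
  | zero => simp
  | succ k ih =>
    rw [pow_succ', mul_smul, mul_smul, ih, reflectionStep_smul, reflectionStep_smul]
    simp only [mul_pow_mul_inv_eq_iff ha hb, mul_mul_pow_mul_inv_mul_inv_eq_iff ha hb,
      Prod.mk.injEq]
    constructor
    · rw [pow_succ', mul_inv_rev, mul_inv_rev]
      simp only [mul_assoc]
    · rw [Nat.mul_succ, Finset.sum_range_succ, Finset.sum_range_succ]
      ring

lemma reflectionStep_mul_pow_eq_one [DecidableEq G] (ha : a⁻¹ = a) (hb : b⁻¹ = b) {m : ℕ}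
    (hm : (a * b) ^ m = 1) : (reflectionStep a * reflectionStep b) ^ m = 1 := by
  funext ⟨t, ε⟩
  have h := reflectionStep_mul_pow_smul ha hb m t ε
  -- the terms of index `n` and `m + n` of the parity sum coincide
  rw [hm, two_mul, Finset.sum_range_add] at h
  simp only [pow_add, hm, one_mul, inv_one, mul_one, CharTwo.add_self_eq_zero, add_zero] at h
  exact h

end ReflectionStep

namespace CoxeterSystem

variable {B : Type*} {M : CoxeterMatrix B} {W : Type*} [Group W] (cs : CoxeterSystem M W)

local prefix:100 "s" => cs.simple
local prefix:100 "π" => cs.wordProd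
local prefix:100 "ℓ" => cs.length
local prefix:100 "ris " => cs.rightInvSeq
local prefix:100 "lis " => cs.leftInvSeq

/-- Tits' representation, on `W × ZMod 2` rather than on reflections × `ZMod 2`. -/
noncomputable def parityRep [DecidableEq W] : W →* Function.End (W × ZMod 2) :=
  cs.lift ⟨fun i => reflectionStep (s i), fun i j => reflectionStep_mul_pow_eq_one
    (cs.inv_simple i) (cs.inv_simple j) (cs.simple_mul_simple_pow i j)⟩

section Parity

variable [DecidableEq W]

lemma parityRep_simple (i : B) : cs.parityRep (s i) = reflectionStep (s i) :=
  cs.lift_apply_simple _ i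

lemma parityRep_wordProd_smul (ω : List B) (t : W) (ε : ZMod 2) :
    cs.parityRep (π ω) • (t, ε) = (π ω * t * (π ω)⁻¹, ε + ((ris ω).count t : ZMod 2)) := by
  induction ω with
  | nil => simp
  | cons i ω ih =>
    have hcond : (π ω)⁻¹ * s i * π ω = t ↔ π ω * t * (π ω)⁻¹ = s i := by
      rw [← MulAut.conj_symm_apply, MulEquiv.symm_apply_eq, MulAut.conj_apply, eq_comm]
    rw [wordProd_cons, map_mul, mul_smul, ih, parityRep_simple, reflectionStep_smul,
      rightInvSeq, List.count_cons]
    simp only [beq_iff_eq, hcond]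
    simp only [mul_inv_rev, cs.inv_simple, mul_assoc, Nat.cast_add, Nat.cast_ite, Nat.cast_one,
      Nat.cast_zero, add_assoc]

noncomputable def inversionParity (w t : W) : ZMod 2 := (cs.parityRep w • (t, (0 : ZMod 2))).2

lemma inversionParity_wordProd (ω : List B) (t : W) :
    cs.inversionParity (π ω) t = (ris ω).count t := by
  rw [inversionParity, parityRep_wordProd_smul, zero_add]

lemma parityRep_smul (w t : W) (ε : ZMod 2) :
    cs.parityRep w • (t, ε) = (w * t * w⁻¹, ε + cs.inversionParity w t) := by
  obtain ⟨ω, rfl⟩ := cs.wordProd_surjective w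
  rw [parityRep_wordProd_smul, inversionParity_wordProd]

lemma inversionParity_mul (u v t : W) :
    cs.inversionParity (u * v) t =
      cs.inversionParity v t + cs.inversionParity u (v * t * v⁻¹) := by
  have h := congrArg Prod.snd (mul_smul (cs.parityRep u) (cs.parityRep v) (t, (0 : ZMod 2)))
  simpa only [← map_mul, parityRep_smul, zero_add] using h

lemma inversionParity_one (t : W) : cs.inversionParity 1 t = 0 := by
  rw [inversionParity, map_one, one_smul]

lemma inversionParity_self {t : W} (ht : cs.IsReflection t) : cs.inversionParity t t = 1 := by
  obtain ⟨u, i, rfl⟩ := ht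
  have hconj : u⁻¹ * (u * s i * u⁻¹) * u⁻¹⁻¹ = s i := by group
  have hsimple : cs.inversionParity (s i) (s i) = 1 := by
    rw [← cs.wordProd_singleton, inversionParity_wordProd]
    simp
  have hinv := cs.inversionParity_mul u u⁻¹ (u * s i * u⁻¹)
  rw [mul_inv_cancel, inversionParity_one, hconj] at hinv
  rw [inversionParity_mul, hconj, inversionParity_mul, hsimple, mul_inv_cancel_right,
    add_left_comm, ← hinv, add_zero]

lemma inversionParity_mul_self {w t : W} (ht : cs.IsReflection t) :
    cs.inversionParity (w * t) t = cs.inversionParity w t + 1 := by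
  have h := cs.inversionParity_mul (w * t) t t
  rw [mul_inv_cancel_right, mul_assoc, ht.mul_self, mul_one, inversionParity_self cs ht] at h
  rw [h, add_right_comm, CharTwo.add_self_eq_zero, zero_add]

lemma mem_rightInvSeq_of_inversionParity_eq_one {ω : List B} {t : W}
    (h : cs.inversionParity (π ω) t = 1) : t ∈ ris ω := by
  rw [inversionParity_wordProd] at h
  refine List.count_pos_iff.mp (Nat.pos_of_ne_zero fun h0 => ?_)
  rw [h0, Nat.cast_zero] at h
  exact zero_ne_one h

lemma isRightInversion_of_inversionParity_eq_one {w t : W} (h : cs.inversionParity w t = 1) :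
    cs.IsRightInversion w t := by
  obtain ⟨ω, hω, rfl⟩ := cs.exists_isReduced w
  exact cs.isRightInversion_of_mem_rightInvSeq hω (cs.mem_rightInvSeq_of_inversionParity_eq_one h)

lemma inversionParity_eq_one_of_isRightInversion {w t : W} (h : cs.IsRightInversion w t) :
    cs.inversionParity w t = 1 := by
  rcases (by decide : ∀ x : ZMod 2, x = 0 ∨ x = 1) (cs.inversionParity w t) with h0 | h1
  · have hwt := cs.isRightInversion_of_inversionParity_eq_one
      (by rw [inversionParity_mul_self cs h.1, h0, zero_add])
    have hlt := hwt.2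
    rw [mul_assoc, h.1.mul_self, mul_one] at hlt
    exact absurd h.2 (lt_asymm hlt)
  · exact h1

end Parity

/-- The strong exchange condition, for words that need not be reduced. -/
theorem mem_rightInvSeq_of_isRightInversion {ω : List B} {t : W}
    (h : cs.IsRightInversion (π ω) t) : t ∈ ris ω := by
  classical
  exact cs.mem_rightInvSeq_of_inversionParity_eq_one
    (cs.inversionParity_eq_one_of_isRightInversion h)

theorem mem_leftInvSeq_of_isLeftInversion {ω : List B} {t : W}
    (h : cs.IsLeftInversion (π ω) t) : t ∈ lis ω := by
  have h' : cs.IsRightInversion (π ω.reverse) t := by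
    rwa [wordProd_reverse, isRightInversion_inv_iff]
  simpa [rightInvSeq_reverse] using cs.mem_rightInvSeq_of_isRightInversion h'

theorem leftInvSeq_append (ω ω' : List B) :
    lis (ω ++ ω') = lis ω ++ (lis ω').map (MulAut.conj (π ω)) := by
  induction ω with
  | nil => simp
  | cons i ω ih => simp [leftInvSeq, ih, wordProd_cons, Function.comp_def]

theorem exists_sublist_isReduced (ω : List B) :
    ∃ ω', ω'.Sublist ω ∧ cs.IsReduced ω' ∧ π ω' = π ω := by
  induction ω with
  | nil => exact ⟨[], List.Sublist.refl _, by simp [IsReduced], rfl⟩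
  | cons i α ih =>
    obtain ⟨α', hsub, hred, hprod⟩ := ih
    rcases cs.length_simple_mul (π α') i with hup | hdown
    · refine ⟨i :: α', hsub.cons_cons i, ?_, by rw [wordProd_cons, wordProd_cons, hprod]⟩
      rw [IsReduced, wordProd_cons, hup, hred.eq, List.length_cons]
    · have hinv : cs.IsLeftInversion (π α') (s i) := ⟨cs.isReflection_simple i, by omega⟩
      obtain ⟨k, hk, hget⟩ := List.getElem_of_mem (cs.mem_leftInvSeq_of_isLeftInversion hinv)
      have herase : s i * π α' = π (α'.eraseIdx k) := by
        rw [← hget, ← List.getD_eq_getElem _ 1, getD_leftInvSeq_mul_wordProd]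
      rw [length_leftInvSeq] at hk
      refine ⟨α'.eraseIdx k,
        (List.eraseIdx_sublist _ _).trans (hsub.trans (List.sublist_cons_self i α)), ?_, ?_⟩
      · rw [IsReduced, ← herase, List.length_eraseIdx_of_lt hk, ← hred.eq]
        omega
      · rw [← herase, hprod, wordProd_cons]

def standardParabolic (I : Set B) : Subgroup W := Subgroup.closure (cs.simple '' I)

variable {cs} {I J : Set B}

lemma simple_mem_standardParabolic {i : B} (hi : i ∈ I) : s i ∈ cs.standardParabolic I :=
  Subgroup.subset_closure ⟨i, hi, rfl⟩

lemma exists_word_of_mem_standardParabolic {w : W} (hw : w ∈ cs.standardParabolic I) :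
    ∃ ω : List B, (∀ i ∈ ω, i ∈ I) ∧ π ω = w := by
  induction hw using Subgroup.closure_induction with
  | mem x hx =>
    obtain ⟨i, hi, rfl⟩ := hx
    exact ⟨[i], by simpa using hi, cs.wordProd_singleton i⟩
  | one => exact ⟨[], by simp, cs.wordProd_nil⟩
  | mul x y _ _ ihx ihy =>
    obtain ⟨ω, hω, rfl⟩ := ihx
    obtain ⟨ω', hω', rfl⟩ := ihy
    exact ⟨ω ++ ω', by simpa [or_imp, forall_and] using And.intro hω hω', cs.wordProd_append ω ω'⟩
  | inv x _ ih =>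
    obtain ⟨ω, hω, rfl⟩ := ih
    exact ⟨ω.reverse, by simpa using hω, cs.wordProd_reverse ω⟩

lemma mem_standardParabolic_of_mem_leftInvSeq {ω : List B} (hω : ∀ i ∈ ω, i ∈ I) {t : W}
    (ht : t ∈ lis ω) : t ∈ cs.standardParabolic I := by
  induction ω generalizing t with
  | nil => simp at ht
  | cons i ω ih =>
    have hi := simple_mem_standardParabolic (cs := cs) (hω i List.mem_cons_self)
    rw [leftInvSeq, List.mem_cons, List.mem_map] at ht
    rcases ht with rfl | ⟨t', ht', rfl⟩
    · exact hi
    · have ht'I := ih (fun j hj => hω j (List.mem_cons_of_mem i hj)) ht'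
      rw [MulAut.conj_apply]
      exact mul_mem (mul_mem hi ht'I) (inv_mem hi)

lemma mem_standardParabolic_of_isLeftInversion {w t : W} (hw : w ∈ cs.standardParabolic I)
    (h : cs.IsLeftInversion w t) : t ∈ cs.standardParabolic I := by
  obtain ⟨ω, hω, rfl⟩ := exists_word_of_mem_standardParabolic hw
  exact mem_standardParabolic_of_mem_leftInvSeq hω (cs.mem_leftInvSeq_of_isLeftInversion h)

lemma exists_isLeftDescent_of_mem_standardParabolic {w : W} (hw : w ∈ cs.standardParabolic I)
    (hne : w ≠ 1) : ∃ i ∈ I, cs.IsLeftDescent w i := by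
  obtain ⟨ω, hω, rfl⟩ := exists_word_of_mem_standardParabolic hw
  obtain ⟨ω', hsub, hred, hprod⟩ := cs.exists_sublist_isReduced ω
  rw [← hprod] at hne ⊢
  rcases ω' with _ | ⟨i, α⟩
  · exact absurd cs.wordProd_nil hne
  · refine ⟨i, hω i (hsub.subset List.mem_cons_self), ?_⟩
    rw [IsLeftDescent, wordProd_cons, simple_mul_simple_cancel_left, ← wordProd_cons, hred.eq,
      List.length_cons]
    exact Nat.lt_succ_of_le (cs.length_wordProd_le α)

lemma map_mem_standardParabolic (f : W →* W) (hf : ∀ i ∈ I, ∃ j ∈ I, f (s i) = s j)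
    {w : W} (hw : w ∈ cs.standardParabolic I) : f w ∈ cs.standardParabolic I := by
  refine (Subgroup.closure_le (K := (cs.standardParabolic I).comap f)).mpr ?_ hw
  rintro _ ⟨i, hi, rfl⟩
  obtain ⟨j, hj, hfj⟩ := hf i hi
  rw [SetLike.mem_coe, Subgroup.mem_comap, hfj]
  exact simple_mem_standardParabolic hj

lemma exists_map_standardParabolic_eq (f : W →* W) (hf : ∀ w, ℓ (f w) = ℓ w) (I : Set B) :
    ∃ J, (cs.standardParabolic I).map f = cs.standardParabolic J := by
  choose τ hτ using fun i => cs.length_eq_one_iff.mp ((hf (s i)).trans (cs.length_simple i))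
  refine ⟨τ '' I, ?_⟩
  rw [standardParabolic, standardParabolic, MonoidHom.map_closure, Set.image_image,
    Set.image_image]
  simp_rw [hτ]

lemma length_mul_eq_of_forall_le {d : W}
    (hmin : ∀ v ∈ cs.standardParabolic J, ℓ d ≤ ℓ (v * d)) {v : W}
    (hv : v ∈ cs.standardParabolic J) : ℓ (v * d) = ℓ v + ℓ d := by
  have step : ∀ j ∈ J, ∀ y ∈ cs.standardParabolic J, ℓ (y * d) = ℓ y + ℓ d →
      ℓ (s j * y * d) = ℓ (s j * y) + ℓ d := by
    intro j hj y hy ih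
    have hsub := cs.length_mul_le (s j * y) d
    rw [mul_assoc] at hsub ⊢
    rcases cs.length_simple_mul (y * d) j with hup | hdown
    · rcases cs.length_simple_mul y j with h | h <;> omega
    · obtain ⟨γ, hγ, rfl⟩ := cs.exists_isReduced y
      obtain ⟨δ, hδ, rfl⟩ := cs.exists_isReduced d
      have hinv : cs.IsLeftInversion (π (γ ++ δ)) (s j) :=
        ⟨cs.isReflection_simple j, by rw [wordProd_append]; omega⟩
      have hmem := cs.mem_leftInvSeq_of_isLeftInversion hinv
      rw [leftInvSeq_append, List.mem_append, List.mem_map] at hmem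
      rcases hmem with hγj | ⟨t, hδt, hconj⟩
      · have hlt := (cs.isLeftInversion_of_mem_leftInvSeq hγ hγj).2
        rcases cs.length_simple_mul (π γ) j with h | h <;> omega
      · have htJ : t ∈ cs.standardParabolic J := by
          rw [MulAut.conj_apply] at hconj
          rw [show t = (π γ)⁻¹ * s j * π γ by rw [← hconj]; group]
          exact mul_mem (mul_mem (inv_mem hy) (simple_mem_standardParabolic hj)) hy
        exact absurd (cs.isLeftInversion_of_mem_leftInvSeq hδ hδt).2 (not_lt.mpr (hmin t htJ))
  induction hv using Subgroup.closure_induction_left with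
  | one => simp
  | mul_left x hx y hy ih =>
    obtain ⟨j, hj, rfl⟩ := hx
    exact step j hj y hy ih
  | inv_mul_cancel x hx y hy ih =>
    obtain ⟨j, hj, rfl⟩ := hx
    rw [inv_simple]
    exact step j hj y hy ih

variable {d : W}

lemma length_mul_eq_of_forall_not_isLeftDescent (hd : ∀ i ∈ I, ¬cs.IsLeftDescent d i) {v : W}
    (hv : v ∈ cs.standardParabolic I) : ℓ (v * d) = ℓ v + ℓ d := by
  set P := (cs.standardParabolic I : Set W)
  set v₀ := Function.argminOn (fun v => ℓ (v * d)) P ⟨1, one_mem _⟩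
  have hv₀ : v₀ ∈ P := Function.argminOn_mem (fun v => ℓ (v * d)) P _
  have hmin : ∀ v ∈ cs.standardParabolic I, ℓ (v₀ * d) ≤ ℓ (v * (v₀ * d)) := fun v hv => by
    rw [← mul_assoc]
    exact Function.argminOn_le (fun v => ℓ (v * d)) P (mul_mem hv hv₀)
  have hv₀_one : v₀ = 1 := by
    by_contra hne
    obtain ⟨i, hi, hdesc⟩ :=
      exists_isLeftDescent_of_mem_standardParabolic (inv_mem hv₀) (inv_ne_one.mpr hne)
    have h₁ := length_mul_eq_of_forall_le hmin (inv_mem hv₀)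
    have h₂ := length_mul_eq_of_forall_le hmin
      (mul_mem (simple_mem_standardParabolic hi) (inv_mem hv₀))
    rw [inv_mul_cancel_left] at h₁
    rw [mul_assoc, inv_mul_cancel_left] at h₂
    have hlt : ℓ (s i * v₀⁻¹) < ℓ v₀⁻¹ := hdesc
    exact hd i hi (show ℓ (s i * d) < ℓ d by omega)
  simpa [hv₀_one] using length_mul_eq_of_forall_le hmin hv

lemma conj_simple_mem_of_isLeftDescent (hd : ∀ i ∈ I, ¬cs.IsLeftDescent d i) {x : W}
    (hxI : x ∈ cs.standardParabolic I) (hxJ : d⁻¹ * x * d ∈ cs.standardParabolic J) {i : B}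
    (hi : i ∈ I) (hdesc : cs.IsLeftDescent x i) : d⁻¹ * s i * d ∈ cs.standardParabolic J := by
  have hx := length_mul_eq_of_forall_not_isLeftDescent hd hxI
  have hsx := length_mul_eq_of_forall_not_isLeftDescent hd
    (mul_mem (simple_mem_standardParabolic hi) hxI)
  have hlt : ℓ (s i * x) < ℓ x := hdesc
  obtain ⟨δ, hδ, rfl⟩ := cs.exists_isReduced d
  obtain ⟨γ, hγJ, hγ⟩ := exists_word_of_mem_standardParabolic hxJ
  have hinv : cs.IsLeftInversion (π (δ ++ γ)) (s i) := by
    refine ⟨cs.isReflection_simple i, ?_⟩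
    rw [wordProd_append, hγ, show π δ * ((π δ)⁻¹ * x * π δ) = x * π δ by group, ← mul_assoc]
    omega
  have hmem := cs.mem_leftInvSeq_of_isLeftInversion hinv
  rw [leftInvSeq_append, List.mem_append, List.mem_map] at hmem
  rcases hmem with hδi | ⟨t, hγt, hconj⟩
  · exact absurd (cs.isLeftInversion_of_mem_leftInvSeq hδ hδi).2 (hd i hi)
  · rw [← hconj, MulAut.conj_apply]
    simpa [mul_assoc] using mem_standardParabolic_of_mem_leftInvSeq hγJ hγt

lemma mem_standardParabolic_of_conj_mem (hd : ∀ i ∈ I, ¬cs.IsLeftDescent d i) {x : W}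
    (hxI : x ∈ cs.standardParabolic I) (hxJ : d⁻¹ * x * d ∈ cs.standardParabolic J) :
    x ∈ cs.standardParabolic {i | i ∈ I ∧ d⁻¹ * s i * d ∈ cs.standardParabolic J} := by
  induction hn : ℓ x using Nat.strong_induction_on generalizing x with
  | _ n ih =>
    by_cases hx1 : x = 1
    · exact hx1 ▸ one_mem _
    obtain ⟨i, hi, hdesc⟩ := exists_isLeftDescent_of_mem_standardParabolic hxI hx1
    have hiJ := conj_simple_mem_of_isLeftDescent hd hxI hxJ hi hdesc
    have hsx := ih _ (hn ▸ hdesc) (mul_mem (simple_mem_standardParabolic hi) hxI)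
      (by simpa [mul_assoc] using mul_mem hiJ hxJ) rfl
    rw [← cs.simple_mul_simple_cancel_left (w := x) i]
    exact mul_mem (simple_mem_standardParabolic ⟨hi, hiJ⟩) hsx

/-- Kilmoyer's theorem. -/
theorem standardParabolic_inf_map_conj (hd : ∀ i ∈ I, ¬cs.IsLeftDescent d i) :
    cs.standardParabolic I ⊓ (cs.standardParabolic J).map (MulAut.conj d).toMonoidHom =
      cs.standardParabolic {i | i ∈ I ∧ d⁻¹ * s i * d ∈ cs.standardParabolic J} := by
  refine le_antisymm (fun x hx => ?_) ((Subgroup.closure_le _).mpr ?_)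
  · obtain ⟨hxI, hxJ⟩ := Subgroup.mem_inf.mp hx
    rw [Subgroup.mem_map_equiv, MulAut.conj_symm_apply] at hxJ
    exact mem_standardParabolic_of_conj_mem hd hxI hxJ
  · rintro _ ⟨i, ⟨hi, hiJ⟩, rfl⟩
    refine Subgroup.mem_inf.mpr ⟨simple_mem_standardParabolic hi, ?_⟩
    rwa [Subgroup.mem_map_equiv, MulAut.conj_symm_apply]

end CoxeterSystem

namespace SemidirectProduct

variable {N G : Type*} [Group N] [Group G] {φ : G →* MulAut N}

lemma left_mem_and_right_mem_of_mem_sup {N' : Subgroup N} {G' : Subgroup G}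
    (hφ : ∀ g ∈ G', ∀ n ∈ N', φ g n ∈ N') {x : N ⋊[φ] G}
    (hx : x ∈ N'.map inl ⊔ G'.map inr) : x.left ∈ N' ∧ x.right ∈ G' := by
  let P : Subgroup (N ⋊[φ] G) :=
    { carrier := {x | x.left ∈ N' ∧ x.right ∈ G'}
      one_mem' := ⟨one_mem _, one_mem _⟩
      mul_mem' := fun ⟨ha, ha'⟩ ⟨hb, hb'⟩ => ⟨mul_mem ha (hφ _ ha' _ hb), mul_mem ha' hb'⟩
      inv_mem' := fun ⟨ha, ha'⟩ => ⟨hφ _ (inv_mem ha') _ (inv_mem ha), inv_mem ha'⟩ }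
  refine (sup_le ?_ ?_ : _ ≤ P) hx
  · rintro _ ⟨n, hn, rfl⟩
    exact ⟨hn, one_mem _⟩
  · rintro _ ⟨g, hg, rfl⟩
    exact ⟨one_mem _, hg⟩

lemma mul_inl_mul_inv (x : N ⋊[φ] G) (n : N) :
    x * inl n * x⁻¹ = inl (x.left * φ x.right n * x.left⁻¹) := by
  ext <;> simp [mul_assoc]

lemma comap_inl_map_conj_map_inl (x : N ⋊[φ] G) (H : Subgroup N) :
    ((H.map inl).map (MulAut.conj x).toMonoidHom).comap inl =
      (H.map (φ x.right).toMonoidHom).map (MulAut.conj x.left).toMonoidHom := by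
  have hcomp : (MulAut.conj x).toMonoidHom.comp inl =
      inl.comp ((MulAut.conj x.left).toMonoidHom.comp (φ x.right).toMonoidHom) := by
    refine MonoidHom.ext fun n => ?_
    simp only [MonoidHom.comp_apply, MulEquiv.coe_toMonoidHom, MulAut.conj_apply]
    exact mul_inl_mul_inv x n
  rw [Subgroup.map_map, hcomp, ← Subgroup.map_map,
    Subgroup.comap_map_eq_self_of_injective inl_injective, Subgroup.map_map]

end SemidirectProduct
open SemidirectProduct

/-- STATEMENT 6: With `W₁' = W₁Ω₁` (`Ω₁` stabilizing `S₁`) and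
`W_{1,2} = W₁ ∩ W₂`: if `σ ∈ W₁'` is of minimal length in its double coset
`W_{1,2}σW_{1,2}`, then `W₂ ∩ σW₂σ⁻¹` is a standard parabolic (special)
subgroup of `W₂`. -/
theorem stmt8 {B : Type*} {M : CoxeterMatrix B} {W : Type*} [Group W]
    (cs : CoxeterSystem M W) {Ω : Type*} [Group Ω] (φ : Ω →* MulAut W)
    (hφ : ∀ (ρ : Ω) (v : W), cs.length (φ ρ v) = cs.length v)
    (ℓt : W ⋊[φ] Ω → ℕ) (hℓt : ∀ x, ℓt x = cs.length x.left)
    (S₁ S₂ : Set B) (W₁ W₂ : Subgroup W)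
    (hW₁ : W₁ = Subgroup.closure (cs.simple '' S₁))
    (hW₂ : W₂ = Subgroup.closure (cs.simple '' S₂))
    (Ω₁ : Subgroup Ω)
    (hΩ₁ : ∀ ρ ∈ Ω₁, ∀ i ∈ S₁, ∃ j ∈ S₁, φ ρ (cs.simple i) = cs.simple j)
    (W₁' : Subgroup (W ⋊[φ] Ω))
    (hW₁' : W₁' = Subgroup.map (inl : W →* W ⋊[φ] Ω) W₁ ⊔
        Subgroup.map (inr : Ω →* W ⋊[φ] Ω) Ω₁)
    (W₁₂ : Subgroup W) (hW₁₂ : W₁₂ = W₁ ⊓ W₂)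
    (σ : W ⋊[φ] Ω) (hσ : σ ∈ W₁')
    (hmin : ∀ a ∈ W₁₂, ∀ b ∈ W₁₂, ℓt σ ≤ ℓt (inl a * σ * inl b)) :
    ∃ T ⊆ S₂,
      W₂ ⊓ Subgroup.comap (inl : W →* W ⋊[φ] Ω)
          (Subgroup.map (MulAut.conj σ).toMonoidHom
            (Subgroup.map (inl : W →* W ⋊[φ] Ω) W₂))
        = Subgroup.closure (cs.simple '' T) := by
  change W₁ = cs.standardParabolic S₁ at hW₁
  change W₂ = cs.standardParabolic S₂ at hW₂
  subst hW₁ hW₂ hW₁' hW₁₂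
  obtain ⟨hσW₁, -⟩ := left_mem_and_right_mem_of_mem_sup
    (fun ρ hρ _ => cs.map_mem_standardParabolic (φ ρ).toMonoidHom (hΩ₁ ρ hρ)) hσ
  have hσ_desc : ∀ i ∈ S₂, ¬cs.IsLeftDescent σ.left i := fun i hi hlt => by
    have hiS₁ := cs.mem_standardParabolic_of_isLeftInversion hσW₁ ⟨cs.isReflection_simple i, hlt⟩
    have h := hmin (cs.simple i) ⟨hiS₁, cs.simple_mem_standardParabolic hi⟩ 1 (one_mem _)
    simp only [hℓt, mul_one, map_one, mul_left, left_inl, right_inl, MulAut.one_apply] at h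
    exact absurd hlt (not_lt.mpr h)
  obtain ⟨J, hJ⟩ := cs.exists_map_standardParabolic_eq (φ σ.right).toMonoidHom (hφ σ.right) S₂
  rw [comap_inl_map_conj_map_inl, hJ]
  exact ⟨_, fun _ => And.left, cs.standardParabolic_inf_map_conj hσ_desc⟩
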